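/- Let G = (V, E, w) be a finite weighted graph and let F be a minimum spanning forest of G. Let G⁺ be obtained from G by adding a new edge e = (u, v) with weight w(e). Then F ∪ {e} contains a minimum spanning forest of G⁺; in particular, a minimum spanning forest of G⁺ can be computed using only the edges of F together with e. -/

import Mathlib

open SimpleGraph Finset

variable {V : Type*} {W : Type*} [AddCommMonoid W] [LinearOrder W] [IsOrderedAddMonoid W]

/-- The simple graph whose edges are a given finite set of (unordered) pairs. -/
def fromEdges (F : Finset (Sym2 V)) : SimpleGraph V := SimpleGraph.fromEdgeSet ↑F

/-- Two edge sets induce the same connected components (reachability). -/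
def SameComponents (E F : Finset (Sym2 V)) : Prop :=
  ∀ a b : V, (fromEdges E).Reachable a b ↔ (fromEdges F).Reachable a b

/-- `F` is a spanning forest of the graph with edge set `E`. -/
def IsSpanningForest (E F : Finset (Sym2 V)) : Prop :=
  F ⊆ E ∧ (fromEdges F).IsAcyclic ∧ SameComponents E F

/-- `F` is a minimum spanning forest of the graph with edge set `E` and weights `w`. -/
def IsMSF (E : Finset (Sym2 V)) (w : Sym2 V → W) (F : Finset (Sym2 V)) : Prop :=
  IsSpanningForest E F ∧ ∀ F', IsSpanningForest E F' → F.sum w ≤ F'.sum w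

/-- `T` is a minimum spanning tree of the (connected) graph with edge set `E`. -/
def IsMST (E : Finset (Sym2 V)) (w : Sym2 V → W) (T : Finset (Sym2 V)) : Prop :=
  IsMSF E w T ∧ (fromEdges T).Connected

/-!
Take an MSF `M` of `G⁺` with as few edges outside `F ∪ {e}` as possible, and suppose it has such
an edge `g = cd`; then `g` is an edge of `G`. Symmetric exchange for spanning forests: some edge
`f` of the `F`-path from `c` to `d` joins the two components of `M - g`, so that both `F - f + g`
and `M - g + f` are spanning forests, of `G` and of `G⁺` respectively. Minimality of `F` gives
`w f ≤ w g`, so `M - g + f` is again an MSF of `G⁺`, with fewer edges outside `F ∪ {e}`.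
-/

namespace SimpleGraph

variable {G H : SimpleGraph V}

lemma Reachable.of_forall_adj_reachable (h : ∀ ⦃x y⦄, G.Adj x y → H.Reachable x y) {a b : V}
    (hab : G.Reachable a b) : H.Reachable a b := by
  rw [reachable_iff_reflTransGen] at hab
  induction hab with
  | refl => rfl
  | tail _ hxy ih => exact ih.trans (h hxy)

lemma reachable_sup_edge_self (H : SimpleGraph V) (a b : V) : (H ⊔ edge a b).Reachable a b := by
  by_cases hab : a = b
  · exact hab ▸ Reachable.rfl
  · exact Adj.reachable (Or.inr ((edge_adj a b a b).2 ⟨Or.inl ⟨rfl, rfl⟩, hab⟩))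

lemma reachable_sup_edge_iff {a b u v : V} :
    (H ⊔ edge a b).Reachable u v ↔ H.Reachable u v ∨
      (H.Reachable u a ∧ H.Reachable b v) ∨ (H.Reachable u b ∧ H.Reachable a v) := by
  refine ⟨fun huv ↦ ?_, ?_⟩
  · rw [reachable_iff_reflTransGen] at huv
    induction huv with
    | refl => exact Or.inl Reachable.rfl
    | tail _ hxy ih =>
      rcases (sup_adj _ _ _ _).1 hxy with hxy | hxy
      · have := hxy.reachable
        grind [Reachable.trans]
      · rcases ((edge_adj _ _ _ _).1 hxy).1 with ⟨rfl, rfl⟩ | ⟨rfl, rfl⟩ <;>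
          grind [Reachable.refl]
  · have hab := reachable_sup_edge_self H a b
    rintro (h | ⟨hua, hbv⟩ | ⟨hub, hav⟩)
    · exact h.mono le_sup_left
    · exact ((hua.mono le_sup_left).trans hab).trans (hbv.mono le_sup_left)
    · exact ((hub.mono le_sup_left).trans hab.symm).trans (hav.mono le_sup_left)

lemma reachable_sup_edge_eq_of_not_reachable {a b c d : V}
    (h : (H ⊔ edge a b).Reachable c d) (hn : ¬H.Reachable c d) :
    (H ⊔ edge c d).Reachable = (H ⊔ edge a b).Reachable := by
  have hab : (H ⊔ edge c d).Reachable a b := by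
    have hcd := reachable_sup_edge_self H c d
    rcases reachable_sup_edge_iff.1 h with h | ⟨hca, hbd⟩ | ⟨hcb, had⟩
    · exact absurd h hn
    · exact ((hca.symm.mono le_sup_left).trans hcd).trans (hbd.symm.mono le_sup_left)
    · exact (((hcb.symm.mono le_sup_left).trans hcd).trans (had.symm.mono le_sup_left)).symm
  ext u v
  refine ⟨Reachable.of_forall_adj_reachable ?_, Reachable.of_forall_adj_reachable ?_⟩
  · intro x y hxy
    rcases (sup_adj _ _ _ _).1 hxy with hxy | hxy
    · exact hxy.reachable.mono le_sup_left
    · rcases ((edge_adj _ _ _ _).1 hxy).1 with ⟨rfl, rfl⟩ | ⟨rfl, rfl⟩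
      exacts [h, h.symm]
  · intro x y hxy
    rcases (sup_adj _ _ _ _).1 hxy with hxy | hxy
    · exact hxy.reachable.mono le_sup_left
    · rcases ((edge_adj _ _ _ _).1 hxy).1 with ⟨rfl, rfl⟩ | ⟨rfl, rfl⟩
      exacts [hab, hab.symm]

lemma IsAcyclic.not_reachable_deleteEdges_of_mem_edges (hG : G.IsAcyclic) {u v : V}
    {p : G.Walk u v} (hp : p.IsPath) {f : Sym2 V} (hf : f ∈ p.edges) :
    ¬(G.deleteEdges {f}).Reachable u v := by
  intro h
  obtain ⟨q, hq⟩ := h.exists_isPath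
  have hqp : q.mapLe (deleteEdges_le _) = p :=
    congrArg Subtype.val ((hG.subsingleton_path u v).elim ⟨_, hq.mapLe _⟩ ⟨p, hp⟩)
  rw [← hqp, Walk.edges_mapLe_eq_edges] at hf
  have hfq := q.edges_subset_edgeSet hf
  simp [edgeSet_deleteEdges] at hfq

lemma Walk.exists_mem_edges_of_not_reachable {u v : V} (p : G.Walk u v)
    (hp : ∀ t ∈ p.support, H.Reachable u t ∨ H.Reachable v t) (hn : ¬H.Reachable u v) :
    ∃ x y, s(x, y) ∈ p.edges ∧ H.Reachable u x ∧ H.Reachable v y := by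
  obtain ⟨d, hd, hx, hy⟩ := p.exists_boundary_dart {t | H.Reachable u t} Reachable.rfl hn
  exact ⟨d.fst, d.snd, List.mem_map_of_mem hd, hx,
    (hp _ (p.dart_snd_mem_support_of_mem_darts hd)).resolve_left hy⟩

end SimpleGraph

section SpanningForest

variable {E E' F M T : Finset (Sym2 V)}

lemma fromEdges_adj {a b : V} : (fromEdges T).Adj a b ↔ s(a, b) ∈ T ∧ a ≠ b := by
  simp [fromEdges]

lemma fromEdges_mono (h : T ⊆ E) : fromEdges T ≤ fromEdges E :=
  fromEdgeSet_mono (coe_subset.2 h)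

variable [DecidableEq V]

lemma fromEdges_insert (a b : V) : fromEdges (insert s(a, b) T) = fromEdges T ⊔ edge a b := by
  rw [fromEdges, coe_insert, Set.insert_eq, fromEdgeSet_union, sup_comm]
  rfl

lemma fromEdges_erase (g : Sym2 V) : fromEdges (T.erase g) = (fromEdges T).deleteEdges {g} := by
  rw [fromEdges, fromEdges, deleteEdges_fromEdgeSet, coe_erase]

lemma fromEdges_insert_erase {a b : V} (h : s(a, b) ∈ T) :
    fromEdges T = fromEdges (T.erase s(a, b)) ⊔ edge a b := by
  rw [← fromEdges_insert, insert_erase h]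

lemma exists_isSpanningForest (E : Finset (Sym2 V)) : ∃ F, IsSpanningForest E F := by
  classical
  obtain ⟨F, hF, hmax⟩ := exists_max_image (E.powerset.filter fun F ↦ (fromEdges F).IsAcyclic)
    card ⟨∅, mem_filter.2 ⟨empty_mem_powerset E, by simp [fromEdges]⟩⟩
  rw [mem_filter, mem_powerset] at hF
  refine ⟨F, hF.1, hF.2, fun a b ↦ ⟨Reachable.of_forall_adj_reachable fun x y hxy ↦ ?_,
    fun h ↦ h.mono (fromEdges_mono hF.1)⟩⟩
  by_contra hn
  have hxyF : s(x, y) ∉ F := fun h ↦ hn (fromEdges_adj.2 ⟨h, hxy.ne⟩).reachable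
  have := hmax (insert s(x, y) F) (by
    rw [mem_filter, mem_powerset, fromEdges_insert]
    exact ⟨insert_subset (fromEdges_adj.1 hxy).1 hF.1, hF.2.sup_edge_of_not_reachable hn⟩)
  rw [card_insert_of_notMem hxyF] at this
  omega

lemma IsSpanningForest.exchange {a b x y : V} (hT : IsSpanningForest E T) (hab : s(a, b) ∈ T)
    (hxy : s(x, y) ∈ E) (hreach : (fromEdges T).Reachable x y)
    (hn : ¬(fromEdges (T.erase s(a, b))).Reachable x y) :
    IsSpanningForest E (insert s(x, y) (T.erase s(a, b))) := by
  rw [fromEdges_insert_erase hab] at hreach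
  refine ⟨insert_subset hxy ((erase_subset _ _).trans hT.1), ?_, fun u v ↦ ?_⟩
  · rw [fromEdges_insert]
    exact (hT.2.1.anti (fromEdges_mono (erase_subset _ _))).sup_edge_of_not_reachable hn
  · rw [hT.2.2, fromEdges_insert_erase hab, fromEdges_insert,
      reachable_sup_edge_eq_of_not_reachable hreach hn]

lemma IsSpanningForest.exists_exchange (hF : IsSpanningForest E F) (hM : IsSpanningForest E' M)
    (hEE' : E ⊆ E') {c d : V} (hcd : c ≠ d) (hgM : s(c, d) ∈ M) (hgE : s(c, d) ∈ E) :
    ∃ f ∈ F, f ∉ M.erase s(c, d) ∧ IsSpanningForest E (insert s(c, d) (F.erase f)) ∧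
      IsSpanningForest E' (insert f (M.erase s(c, d))) := by
  have hsep : ¬(fromEdges (M.erase s(c, d))).Reachable c d := by
    rw [fromEdges_erase]
    exact isBridge_iff.1 <|
      isAcyclic_iff_forall_adj_isBridge.1 hM.2.1 (fromEdges_adj.2 ⟨hgM, hcd⟩)
  set H := fromEdges (M.erase s(c, d))
  have hFM {a b : V} (h : (fromEdges F).Reachable a b) : (fromEdges M).Reachable a b :=
    (hM.2.2 a b).1 (((hF.2.2 a b).2 h).mono (fromEdges_mono hEE'))
  have hFcd := (hF.2.2 c d).1 (fromEdges_adj.2 ⟨hgE, hcd⟩).reachable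
  obtain ⟨p, hp⟩ := hFcd.exists_isPath
  have hside : ∀ t ∈ p.support, H.Reachable c t ∨ H.Reachable d t := by
    intro t ht
    have hct := hFM ⟨p.takeUntil t ht⟩
    rw [fromEdges_insert_erase hgM, reachable_sup_edge_iff] at hct
    rcases hct with h | ⟨-, h⟩ | ⟨-, h⟩
    exacts [Or.inl h, Or.inr h, Or.inl h]
  obtain ⟨x, y, hxyp, hcx, hdy⟩ := p.exists_mem_edges_of_not_reachable hside hsep
  have hxy := p.adj_of_mem_edges hxyp
  have hxyF : s(x, y) ∈ F := (fromEdges_adj.1 hxy).1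
  have hxy_sep : ¬H.Reachable x y := fun h ↦ hsep ((hcx.trans h).trans hdy.symm)
  refine ⟨s(x, y), hxyF, fun h ↦ hxy_sep (fromEdges_adj.2 ⟨h, hxy.ne⟩).reachable,
    hF.exchange hxyF hgE hFcd ?_, hM.exchange hgM (hEE' (hF.1 hxyF)) (hFM hxy.reachable) hxy_sep⟩
  rw [fromEdges_erase]
  exact hF.2.1.not_reachable_deleteEdges_of_mem_edges hp hxyp

end SpanningForest

section MSF

variable {W : Type*} [AddCommMonoid W] [LinearOrder W] {w : Sym2 V → W}
  {E E' F M T : Finset (Sym2 V)}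

lemma IsSpanningForest.of_fromEdges_eq (hT : IsSpanningForest E T) (hT' : M ⊆ E)
    (h : fromEdges M = fromEdges T) : IsSpanningForest E M := by
  rw [IsSpanningForest, SameComponents, h]
  exact ⟨hT', hT.2⟩

lemma IsMSF.of_sum_le (hM : IsMSF E w M) (hT : IsSpanningForest E T) (h : T.sum w ≤ M.sum w) :
    IsMSF E w T :=
  ⟨hT, fun _ hT' ↦ h.trans (hM.2 _ hT')⟩

lemma exists_isMSF (E : Finset (Sym2 V)) (w : Sym2 V → W) : ∃ F, IsMSF E w F := by
  classical
  obtain ⟨F₀, hF₀⟩ := exists_isSpanningForest E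
  obtain ⟨F, hF, hmin⟩ := exists_min_image (E.powerset.filter (IsSpanningForest E)) (·.sum w)
    ⟨F₀, mem_filter.2 ⟨mem_powerset.2 hF₀.1, hF₀⟩⟩
  exact ⟨F, (mem_filter.1 hF).2,
    fun F' hF' ↦ hmin F' (mem_filter.2 ⟨mem_powerset.2 hF'.1, hF'⟩)⟩

variable [DecidableEq V]

/-- A loop `g` is simply dropped from `M`: minimality of `F` forces `0 ≤ w g`. -/
lemma IsMSF.exists_exchange [IsOrderedCancelAddMonoid W] (hF : IsMSF E w F) (hM : IsMSF E' w M)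
    (hEE' : E ⊆ E') {g : Sym2 V} (hgM : g ∈ M) (hgE : g ∈ E) (hgF : g ∉ F) :
    ∃ M', IsMSF E' w M' ∧ M' ⊆ M ∪ F ∧ g ∉ M' := by
  induction g using Sym2.ind with | h c d => ?_
  by_cases hcd : c = d
  · subst hcd
    have hloop (T : Finset (Sym2 V)) : fromEdges (insert s(c, c) T) = fromEdges T := by
      rw [fromEdges_insert, sup_edge_self]
    have hF' := hF.1.of_fromEdges_eq (insert_subset hgE hF.1.1) (hloop F)
    have hM' := hM.1.of_fromEdges_eq ((erase_subset _ _).trans hM.1.1)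
      (by rw [← hloop, insert_erase hgM])
    have hw : 0 ≤ w s(c, c) := by
      have := hF.2 _ hF'
      rwa [sum_insert hgF, le_add_iff_nonneg_left] at this
    exact ⟨_, hM.of_sum_le hM' ((le_add_of_nonneg_left hw).trans_eq (add_sum_erase _ _ hgM)),
      (erase_subset _ _).trans subset_union_left, notMem_erase _ _⟩
  · obtain ⟨f, hfF, hfM, hF', hM'⟩ := hF.1.exists_exchange hM.1 hEE' hcd hgM hgE
    have hfg : w f ≤ w s(c, d) := by
      have := hF.2 _ hF'
      rw [sum_insert (fun h ↦ hgF (mem_of_mem_erase h)), ← add_sum_erase _ _ hfF] at this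
      exact le_of_add_le_add_right this
    refine ⟨_, hM.of_sum_le hM' ?_,
      insert_subset (mem_union_right _ hfF) ((erase_subset _ _).trans subset_union_left),
      fun h ↦ (mem_insert.1 h).elim (fun h ↦ hgF (h ▸ hfF)) (notMem_erase _ _)⟩
    rw [sum_insert hfM, ← add_sum_erase _ _ hgM]
    exact add_le_add_left hfg _

end MSF

theorem msf_incremental_single_edge_general {V : Type*} [DecidableEq V]
    (E : Finset (Sym2 V)) (w : Sym2 V → ℝ)
    (F : Finset (Sym2 V)) (hF : IsMSF E w F) (e : Sym2 V) :
    ∃ F' : Finset (Sym2 V), IsMSF (insert e E) w F' ∧ F' ⊆ insert e F := by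
  classical
  obtain ⟨M₀, hM₀⟩ := exists_isMSF (insert e E) w
  obtain ⟨M, hM, hmin⟩ := exists_min_image ((insert e E).powerset.filter (IsMSF (insert e E) w))
    (fun M ↦ #(M \ insert e F)) ⟨M₀, mem_filter.2 ⟨mem_powerset.2 hM₀.1.1, hM₀⟩⟩
  rw [mem_filter] at hM
  refine ⟨M, hM.2, fun g hgM ↦ ?_⟩
  by_contra hg
  have hgE : g ∈ E :=
    (mem_insert.1 (hM.2.1.1 hgM)).resolve_left fun h ↦ hg (h ▸ mem_insert_self _ _)
  obtain ⟨M', hM', hM'sub, hgM'⟩ :=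
    hF.exists_exchange hM.2 (subset_insert e E) hgM hgE fun h ↦ hg (mem_insert_of_mem h)
  have hlt : M' \ insert e F ⊂ M \ insert e F := by
    refine (ssubset_iff_of_subset fun t ht ↦ ?_).2
      ⟨g, mem_sdiff.2 ⟨hgM, hg⟩, fun h ↦ hgM' (mem_sdiff.1 h).1⟩
    obtain ⟨htM', htA⟩ := mem_sdiff.1 ht
    refine mem_sdiff.2 ⟨(mem_union.1 (hM'sub htM')).resolve_right fun h ↦ ?_, htA⟩
    exact htA (mem_insert_of_mem h)
  exact (hmin M' (mem_filter.2 ⟨mem_powerset.2 hM'.1.1, hM'⟩)).not_gt (card_lt_card hlt)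

/-- Single-edge incremental update: if `F` is an MSF of `G` and `G⁺` is obtained by
adding one edge `e`, then an MSF of `G⁺` can be found among the edges of `F` plus `e`. -/
theorem msf_incremental_single_edge {V : Type*} [Fintype V] [DecidableEq V]
    (E : Finset (Sym2 V)) (w : Sym2 V → ℝ)
    (F : Finset (Sym2 V)) (hF : IsMSF E w F) (e : Sym2 V) :
    ∃ F' : Finset (Sym2 V), IsMSF (insert e E) w F' ∧ F' ⊆ insert e F :=
  msf_incremental_single_edge_general E w F hF e
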